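/- arXiv:1703.05026 — 8 statements merged into one kernel-verified Lean document; each statement's English description precedes it below -/
import Mathlib

section
/- Let K be a field of characteristic 2 and θ a Tits endomorphism of K. An element z ∈ K is called a Tits trace if z = x^θ + x for some x ∈ K. If z^θ is a Tits trace, then z is a Tits trace. -/
theorem eq_map_add_add_of_map_eq_map_add {R : Type*} [Ring R] [CharP R 2] (f : R →+ R)
    {x z : R} (h : f z = f x + x) : z = f (z + x) + (z + x) := by
  rw [map_add, h]
  calc z = z + (f x + f x) + (x + x) := by simp only [CharTwo.add_self_eq_zero, add_zero]
    _ = f x + x + f x + (z + x) := by abel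

theorem tits_trace_of_theta_trace_general {K : Type*} [Field K] [CharP K 2] (θ : K →+* K)
    (z : K) (h : ∃ x : K, θ z = θ x + x) :
    ∃ x : K, z = θ x + x := by
  obtain ⟨x, hx⟩ := h
  exact ⟨z + x, eq_map_add_add_of_map_eq_map_add θ.toAddMonoidHom hx⟩

/-- If `θ` is a Tits endomorphism of a field `K` of characteristic 2 and `z^θ` is a
Tits trace (an element of the form `x^θ + x`), then so is `z`. -/
theorem tits_trace_of_theta_trace {K : Type*} [Field K] [CharP K 2] (θ : K →+* K)
    (hθ : ∀ x : K, θ (θ x) = x ^ 2) (z : K) (h : ∃ x : K, θ z = θ x + x) :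
    ∃ x : K, z = θ x + x :=
  tits_trace_of_theta_trace_general θ z h
end

section
/- Let K be a field of characteristic 2, θ a Tits endomorphism of K, δ ∈ K, and L the splitting field over K of x² + x + δ, with γ ∈ L a root. If δ = λ^θ + λ for some λ ∈ K, then the map extending θ by sending γ to γ + λ (i.e., a + bγ ↦ a^θ + b^θ(γ + λ)) is a Tits endomorphism of L. -/
/-!
As `γ ∉ K`, the polynomial `x² + x + δ` is the minimal polynomial of `γ`, so `L ≅ K[x]/(x² + x + δ)`
and ring maps out of `L` extending `θ` correspond to roots of `x² + x + δ^θ`. Since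
`δ^θ = λ² + λ^θ`, the element `γ + λ` is such a root: in characteristic 2,
`(γ + λ)² + (γ + λ) = δ + λ² + λ = δ^θ`. Finally `ψ ∘ ψ` and the Frobenius agree on `K` and on `γ`,
because `ψ (ψ γ) = γ + λ + λ^θ = γ + δ = γ²`.
-/

open Polynomial IntermediateField

theorem minpoly_eq_of_natDegree_eq_two {K L : Type*} [Field K] [Field L] [Algebra K L]
    {f : K[X]} {x : L} (hmonic : f.Monic) (hdeg : f.natDegree = 2) (hroot : aeval x f = 0)
    (hx : x ∉ Set.range (algebraMap K L)) : minpoly K x = f := by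
  have hint : IsIntegral K x := ⟨f, hmonic, hroot⟩
  have hne_one : (minpoly K x).natDegree ≠ 1 := fun h => hx (minpoly.natDegree_eq_one_iff.mp h)
  have hpos := minpoly.natDegree_pos hint
  exact (eq_of_monic_of_dvd_of_natDegree_le (minpoly.monic hint) hmonic
    (minpoly.dvd K x hroot) (by omega)).symm

theorem adjoin_simple_eq_top_of_forall_eq_add_mul {K L : Type*} [Field K] [Field L] [Algebra K L]
    {γ : L} (hspan : ∀ z : L, ∃ a b : K, z = algebraMap K L a + algebraMap K L b * γ) :
    K⟮γ⟯ = ⊤ := by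
  refine eq_top_iff.mpr fun z _ => ?_
  obtain ⟨a, b, rfl⟩ := hspan z
  exact add_mem (_root_.algebraMap_mem _ a)
    (mul_mem (_root_.algebraMap_mem _ b) (mem_adjoin_simple_self K γ))

theorem exists_ringHom_extending_of_adjoin_simple_eq_top {K L M : Type*} [Field K] [Field L]
    [CommRing M] [Algebra K L] {γ : L} (hγ : IsIntegral K γ) (htop : K⟮γ⟯ = ⊤) (σ : K →+* M)
    (μ : M) (hμ : (minpoly K γ).eval₂ σ μ = 0) :
    ∃ ψ : L →+* M, ψ.comp (algebraMap K L) = σ ∧ ψ γ = μ := by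
  let e : L ≃ₐ[K] AdjoinRoot (minpoly K γ) :=
    (topEquiv.symm.trans (equivOfEq htop.symm)).trans (adjoinRootEquivAdjoin K hγ).symm
  refine ⟨(AdjoinRoot.lift σ μ hμ).comp e.toRingHom, ?_, ?_⟩
  · ext a
    simp [e, AdjoinRoot.lift_of]
  · have : e γ = AdjoinRoot.root (minpoly K γ) := by
      rw [← adjoinRootEquivAdjoin_symm_apply_gen K hγ]
      rfl
    simp [this, AdjoinRoot.lift_root]

theorem ringHom_ext_of_forall_eq_add_mul {K L M : Type*} [CommSemiring K] [Semiring L]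
    [Semiring M] [Algebra K L] {γ : L}
    (hspan : ∀ z : L, ∃ a b : K, z = algebraMap K L a + algebraMap K L b * γ) {φ₁ φ₂ : L →+* M}
    (hK : φ₁.comp (algebraMap K L) = φ₂.comp (algebraMap K L)) (hγ : φ₁ γ = φ₂ γ) : φ₁ = φ₂ := by
  ext z
  obtain ⟨a, b, rfl⟩ := hspan z
  simp only [map_add, map_mul, ← RingHom.comp_apply, hK, hγ]

/-- Let `K` be a field of characteristic 2, `θ` a Tits endomorphism of `K`, `δ ∈ K`,
and `L = K(γ)` the splitting field over `K` of `x² + x + δ`, with `γ` a root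
(`γ ∉ K`, and every element of `L` has the form `a + bγ` with `a, b ∈ K`).
If `δ = λ^θ + λ` for some `λ ∈ K`, then the map extending `θ` which sends `γ` to
`γ + λ`, i.e. `a + bγ ↦ a^θ + b^θ(γ + λ)`, is a Tits endomorphism of `L`. -/
theorem tits_extension_of_trace {K L : Type*} [Field K] [CharP K 2] [Field L]
    [Algebra K L] (θ : K →+* K) (hθ : ∀ x : K, θ (θ x) = x ^ 2)
    (δ lam : K) (hδ : δ = θ lam + lam) (γ : L)
    (hγ : γ ^ 2 + γ + algebraMap K L δ = 0)
    (hirr : γ ∉ Set.range (algebraMap K L))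
    (hspan : ∀ z : L, ∃ a b : K, z = algebraMap K L a + algebraMap K L b * γ) :
    ∃ ψ : L →+* L,
      (∀ a b : K, ψ (algebraMap K L a + algebraMap K L b * γ)
          = algebraMap K L (θ a) + algebraMap K L (θ b) * (γ + algebraMap K L lam)) ∧
      (∀ z : L, ψ (ψ z) = z ^ 2) := by
  have : CharP L 2 := charP_of_injective_algebraMap (algebraMap K L).injective 2
  have h2 : (2 : L) = 0 := CharTwo.two_eq_zero
  have hsq : γ ^ 2 = γ + algebraMap K L (θ lam) + algebraMap K L lam := by
    rw [add_assoc, ← map_add, ← hδ]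
    exact CharTwo.add_eq_zero.mp (by rwa [add_assoc] at hγ)
  have hf : aeval γ (X ^ 2 + X + C δ) = 0 := by simpa using hγ
  have hmin : minpoly K γ = X ^ 2 + X + C δ :=
    minpoly_eq_of_natDegree_eq_two (by monicity!) (by compute_degree!) hf hirr
  have hroot : (minpoly K γ).eval₂ ((algebraMap K L).comp θ) (γ + algebraMap K L lam) = 0 := by
    simp only [hmin, eval₂_add, eval₂_pow, eval₂_X, eval₂_C, RingHom.comp_apply, hδ, map_add, hθ,
      map_pow]
    set l := algebraMap K L lam
    linear_combination hsq + (γ * l + l ^ 2 + γ + l + algebraMap K L (θ lam)) * h2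
  obtain ⟨ψ, hψK, hψγ⟩ := exists_ringHom_extending_of_adjoin_simple_eq_top ⟨_, by monicity!, hf⟩
    (adjoin_simple_eq_top_of_forall_eq_add_mul hspan) _ _ hroot
  have hψa (a : K) : ψ (algebraMap K L a) = algebraMap K L (θ a) := congr($hψK a)
  refine ⟨ψ, fun a b => by simp only [map_add, map_mul, hψa, hψγ], ?_⟩
  have hfrob : ψ.comp ψ = frobenius L 2 := by
    refine ringHom_ext_of_forall_eq_add_mul hspan ?_ ?_
    · ext a
      simp [hψa, hθ, frobenius_def]
    · simp only [RingHom.comp_apply, hψγ, map_add, hψa, frobenius_def, hsq]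
      ring
  exact fun z => congr($hfrob z)
end

section
/- Let K be a field of characteristic 2, θ a Tits endomorphism of K, δ ∈ K, L the splitting field of x² + x + δ over K with [L:K] = 2, and γ ∈ L a root. If θ extends to a Tits endomorphism θ₁ of L, then δ is a Tits trace of K: writing γ^{θ₁} = a + bγ with a, b ∈ K, one has b = 1 and δ = a^θ + a. -/
/-!
Applying `θ₁` to `θ₁ γ = a + bγ` gives `γ² = -δ - γ` on one side and
`(θ a + θ b · a) + θ b · b · γ` on the other, so comparing coefficients in the basis `1, γ`
yields `θ b · b = -1` and `θ a + θ b · a = -δ`. Applying `θ` to the first equation gives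
`b² · θ b = -1`, whence `b = 1`. Finally `θ` inherits the Tits property from `θ₁`, and a Tits
endomorphism forces characteristic 2 (`θ (θ 2) = 2` must equal `2² = 4`), so `-δ = δ`.
-/

theorem two_eq_zero_of_map_map_eq_sq {R : Type*} [CommRing R] (σ : R →+* R)
    (hσ : ∀ x, σ (σ x) = x ^ 2) : (2 : R) = 0 := by
  have h := hσ 2
  rw [map_ofNat, map_ofNat] at h
  linear_combination -h

theorem map_map_eq_sq_of_extends {K L : Type*} [Field K] [Ring L] [Nontrivial L] [Algebra K L]
    {θ : K →+* K} {θ₁ : L →+* L} (hext : ∀ a, θ₁ (algebraMap K L a) = algebraMap K L (θ a))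
    (hθ₁ : ∀ z, θ₁ (θ₁ z) = z ^ 2) (x : K) : θ (θ x) = x ^ 2 :=
  (algebraMap K L).injective <| by rw [← hext, ← hext, hθ₁, map_pow]

theorem eq_and_eq_of_algebraMap_add_mul_eq {K L : Type*} [Field K] [CommRing L] [Nontrivial L]
    [Algebra K L] {γ : L} (hγ : γ ∉ Set.range (algebraMap K L)) {a b c d : K}
    (h : algebraMap K L a + algebraMap K L b * γ = algebraMap K L c + algebraMap K L d * γ) :
    a = c ∧ b = d := by
  obtain rfl | hbd := eq_or_ne b d
  · exact ⟨(algebraMap K L).injective (add_right_cancel h), rfl⟩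
  · refine absurd ⟨(b - d)⁻¹ * (c - a), ?_⟩ hγ
    have hu : algebraMap K L (b - d)⁻¹ * (algebraMap K L b - algebraMap K L d) = 1 := by
      rw [← map_sub, ← map_mul, inv_mul_cancel₀ (sub_ne_zero.2 hbd), map_one]
    rw [map_mul, map_sub]
    linear_combination -algebraMap K L (b - d)⁻¹ * h + γ * hu

theorem eq_one_of_map_mul_self_eq_neg_one {R : Type*} [CommRing R] {σ : R →+* R} {b : R}
    (hσ : σ (σ b) = b ^ 2) (hb : σ b * b = -1) : b = 1 := by
  have h := congrArg σ hb
  rw [map_mul, map_neg, map_one, hσ] at h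
  linear_combination b * hb - h

theorem tits_trace_of_extension_general {K L : Type*} [Field K] [Field L]
    [Algebra K L] (θ : K →+* K)
    (δ : K) (γ : L) (hγ : γ ^ 2 + γ + algebraMap K L δ = 0)
    (hirr : γ ∉ Set.range (algebraMap K L))
    (θ₁ : L →+* L) (hext : ∀ a : K, θ₁ (algebraMap K L a) = algebraMap K L (θ a))
    (hθ₁ : ∀ z : L, θ₁ (θ₁ z) = z ^ 2) :
    ∀ a b : K, θ₁ γ = algebraMap K L a + algebraMap K L b * γ →
      b = 1 ∧ δ = θ a + a := by
  intro a b hab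
  have hθ := map_map_eq_sq_of_extends hext hθ₁
  have hsq : algebraMap K L (θ a + θ b * a) + algebraMap K L (θ b * b) * γ =
      algebraMap K L (-δ) + algebraMap K L (-1) * γ := by
    have h := hθ₁ γ
    rw [hab, map_add, map_mul, hext, hext, hab] at h
    simp only [map_add, map_mul, map_neg, map_one]
    linear_combination h + hγ
  obtain ⟨ha, hb⟩ := eq_and_eq_of_algebraMap_add_mul_eq hirr hsq
  obtain rfl := eq_one_of_map_mul_self_eq_neg_one (hθ b) hb
  rw [map_one, one_mul] at ha
  exact ⟨rfl, by linear_combination -ha + δ * two_eq_zero_of_map_map_eq_sq θ hθ⟩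

/-- Let `K` be a field of characteristic 2, `θ` a Tits endomorphism of `K`, `δ ∈ K`,
`L` the splitting field of `x² + x + δ` over `K` with `[L : K] = 2`, and `γ ∈ L` a root
(so `γ ∉ K`). If `θ` extends to a Tits endomorphism `θ₁` of `L`, then `δ` is a Tits
trace of `K`: writing `θ₁ γ = a + bγ` with `a, b ∈ K`, one has `b = 1` and
`δ = a^θ + a`. -/
theorem tits_trace_of_extension {K L : Type*} [Field K] [CharP K 2] [Field L]
    [Algebra K L] (θ : K →+* K) (hθ : ∀ x : K, θ (θ x) = x ^ 2)
    (δ : K) (γ : L) (hγ : γ ^ 2 + γ + algebraMap K L δ = 0)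
    (hirr : γ ∉ Set.range (algebraMap K L))
    (hdim : Module.finrank K L = 2)
    (θ₁ : L →+* L) (hext : ∀ a : K, θ₁ (algebraMap K L a) = algebraMap K L (θ a))
    (hθ₁ : ∀ z : L, θ₁ (θ₁ z) = z ^ 2) :
    ∀ a b : K, θ₁ γ = algebraMap K L a + algebraMap K L b * γ →
      b = 1 ∧ δ = θ a + a :=
  tits_trace_of_extension_general θ δ γ hγ hirr θ₁ hext hθ₁
end

section
/- Let K = F₂(α, β) be a purely transcendental extension of F₂ in two variables, and let θ be the unique Tits endomorphism of K with β^θ = α (and hence α^θ = β²). Then β is not a Tits trace: there is no g ∈ K with β = g^θ + g. -/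
/-!
Applying `θ` to `β = g^θ + g` gives `α = g² + g^θ`, so in characteristic 2 the element `g`
satisfies the Artin–Schreier equation `g² + g = α + β`. Since `F₂[α, β]` is integrally closed, `g`
is then a polynomial, and specialising `α ↦ t`, `β ↦ 0` yields a polynomial `q ∈ F₂[t]` with
`q² + q = t`, which is impossible since `q² + q` has even degree.
-/

open MvPolynomial

theorem sq_add_self_eq_map_add_self_of_eq_map_add {R : Type*} [CommRing R] [CharP R 2]
    (θ : R →+* R) {g b : R} (hθg : θ (θ g) = g ^ 2) (hb : b = θ g + g) :
    g ^ 2 + g = θ b + b := by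
  rw [hb, map_add, hθg]
  linear_combination -CharTwo.add_self_eq_zero (θ g)

theorem IsIntegrallyClosed.exists_sq_add_self_eq {A K : Type*} [CommRing A] [CommRing K]
    [Algebra A K] [IsFractionRing A K] [IsIntegrallyClosed A]
    {g : K} {a : A} (hg : g ^ 2 + g = algebraMap A K a) :
    ∃ p : A, p ^ 2 + p = a := by
  have hint : IsIntegral A g := by
    refine ⟨Polynomial.X ^ 2 + (Polynomial.X - Polynomial.C a),
      Polynomial.monic_X_pow_add ?_, ?_⟩
    · exact (Polynomial.degree_X_sub_C_le a).trans_lt (by norm_num)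
    · simp only [Polynomial.eval₂_add, Polynomial.eval₂_sub, Polynomial.eval₂_X_pow,
        Polynomial.eval₂_X, Polynomial.eval₂_C]
      linear_combination hg
  obtain ⟨p, rfl⟩ := IsIntegrallyClosed.isIntegral_iff.mp hint
  exact ⟨p, IsFractionRing.injective A K (by simpa using hg)⟩

theorem Polynomial.natDegree_sq_add_self {R : Type*} [Semiring R] [NoZeroDivisors R]
    (q : Polynomial R) : (q ^ 2 + q).natDegree = 2 * q.natDegree := by
  rcases Nat.eq_zero_or_pos q.natDegree with h0 | hpos
  · rw [Polynomial.eq_C_of_natDegree_eq_zero h0, ← Polynomial.C_pow, ← Polynomial.C_add]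
    simp
  · rw [Polynomial.natDegree_add_eq_left_of_natDegree_lt, Polynomial.natDegree_pow]
    rw [Polynomial.natDegree_pow]
    omega

theorem MvPolynomial.sq_add_self_ne_X_add_X {σ R : Type*} [CommSemiring R] [NoZeroDivisors R]
    [Nontrivial R] {i j : σ} (hij : i ≠ j) (p : MvPolynomial σ R) : p ^ 2 + p ≠ X i + X j := by
  classical
  intro hp
  have hq := congrArg (fun r => (aeval (Pi.single i (Polynomial.X : Polynomial R)) r).natDegree) hp
  simp only [map_add, map_pow, aeval_X, Pi.single_eq_same, Pi.single_eq_of_ne' hij,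
    add_zero, Polynomial.natDegree_sq_add_self, Polynomial.natDegree_X] at hq
  omega

theorem beta_not_tits_trace_general
    (θ : FractionRing (MvPolynomial (Fin 2) (ZMod 2)) →+*
         FractionRing (MvPolynomial (Fin 2) (ZMod 2)))
    (hθ : ∀ x, θ (θ x) = x ^ 2)
    (hβ : θ (algebraMap (MvPolynomial (Fin 2) (ZMod 2)) _ (X 1))
        = algebraMap (MvPolynomial (Fin 2) (ZMod 2)) _ (X 0)) :
    ¬ ∃ g : FractionRing (MvPolynomial (Fin 2) (ZMod 2)),
        algebraMap (MvPolynomial (Fin 2) (ZMod 2)) _ (X 1) = θ g + g := by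
  rintro ⟨g, hg⟩
  have hsq : g ^ 2 + g = algebraMap (MvPolynomial (Fin 2) (ZMod 2)) _ (X 0 + X 1) := by
    rw [sq_add_self_eq_map_add_self_of_eq_map_add θ (hθ g) hg, hβ, map_add]
  obtain ⟨p, hp⟩ := IsIntegrallyClosed.exists_sq_add_self_eq hsq
  exact sq_add_self_ne_X_add_X (by decide) p hp

/-- Let `K = F₂(α, β)` be a purely transcendental extension of `F₂` in two variables
(realized as the fraction field of `F₂[α, β]`), and let `θ` be the unique Tits
endomorphism of `K` with `β^θ = α` (and hence `α^θ = β²`). Then `β` is not a Tits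
trace: there is no `g ∈ K` with `β = g^θ + g`. -/
theorem beta_not_tits_trace
    (θ : FractionRing (MvPolynomial (Fin 2) (ZMod 2)) →+*
         FractionRing (MvPolynomial (Fin 2) (ZMod 2)))
    (hθ : ∀ x, θ (θ x) = x ^ 2)
    (hα : θ (algebraMap (MvPolynomial (Fin 2) (ZMod 2)) _ (X 0))
        = (algebraMap (MvPolynomial (Fin 2) (ZMod 2)) _ (X 1)) ^ 2)
    (hβ : θ (algebraMap (MvPolynomial (Fin 2) (ZMod 2)) _ (X 1))
        = algebraMap (MvPolynomial (Fin 2) (ZMod 2)) _ (X 0)) :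
    ¬ ∃ g : FractionRing (MvPolynomial (Fin 2) (ZMod 2)),
        algebraMap (MvPolynomial (Fin 2) (ZMod 2)) _ (X 1) = θ g + g :=
  beta_not_tits_trace_general θ hθ hβ
end

section
/- Let P = (K, V, q, θ, t ↦ [t], ·) be a polarity algebra. Then for all u, v, w ∈ V: v·(w·u) = f(u, v·w)·u + f(u,v)·(u·w) + q(u)·(v·w), where f = ∂q is the bilinear form associated to q. -/
open QuadraticMap

/-- A polarity algebra (De Medts–Segev–Weiss): a field `K` of characteristic 2, an
anisotropic quadratic space `(K, V, q)` whose polar form `f = ∂q` is not identically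
zero, a Tits endomorphism `θ` of `K`, a `K`-linear embedding `t ↦ [t]` of the twisted
vector space `[K^θ]` (with scalar action `a • [t] = [a^θ t]`) into the radical of `f`,
and a multiplication on `V` satisfying the axioms (R1)–(R7). -/
structure PolarityAlgebra (K V : Type*) [Field K] [CharP K 2]
    [AddCommGroup V] [Module K V] where
  q : QuadraticForm K V
  anisotropic : q.Anisotropic
  f_ne_zero : ∃ u v : V, polar q u v ≠ 0
  θ : K →+* K
  tits : ∀ t : K, θ (θ t) = t ^ 2
  br : K → V
  br_add : ∀ s t : K, br (s + t) = br s + br t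
  br_smul : ∀ a t : K, a • br t = br (θ a * t)
  br_inj : Function.Injective br
  br_rad : ∀ (t : K) (v : V), polar q (br t) v = 0
  mul : V → V → V
  R1 : ∀ v : V, IsLinearMap K fun x => mul x v
  R2 : ∀ (t : K) (v : V), mul v (br t) = t • v
  R3 : ∀ (t : K) (u v : V), mul u (t • v) = θ t • mul u v
  R4 : ∀ (t : K) (v : V), mul (br t) v = br (t * q v)
  R5 : ∀ u v : V, mul (mul u v) v = θ (q v) • u
  R6 : ∀ u v : V, mul v (mul u v) = q v • mul v u
  R7 : ∀ u v w : V, mul u (v + w) = mul u v + mul u w + br (polar q (mul v u) w)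

variable {K V : Type*} [Field K] [CharP K 2] [AddCommGroup V] [Module K V]

/-!
Linearizing (R6) shows that, for fixed `w`, the defect
`D(u, v) = v·(w·u) - (f(u, v·w) u + f(u, v) (u·w) + q(u) (v·w))` satisfies
`D(u, v) + D(v, u) = 0`. By (R3) and `θ² = (·)²` it is quadratic in `u`, and by (R1) it is linear
in `v`, so `t D(u, v) = D(u, t v) = -D(t v, u) = -t² D(v, u) = t² D(u, v)`. This forces `D = 0`
as soon as `K ≠ 𝔽₂`. And `K = 𝔽₂` is impossible: if `f(x, y) ≠ 0`, then `x`, `[1]` and `x + [1]`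
are nonzero, so an anisotropic `q` over `𝔽₂` is `1` on all three, yet `[1]` lies in the radical
of `f`, whence `q(x + [1]) = q(x) + q([1])`.
-/

theorem eq_zero_of_add_swap_eq_zero {R α M : Type*} [DivisionRing R] [SMul R α]
    [AddCommGroup M] [Module R M] {D : α → α → M} (hswap : ∀ x y, D x y + D y x = 0)
    {t : R} (ht : t * t ≠ t) (hleft : ∀ x y, D (t • x) y = (t * t) • D x y)
    (hright : ∀ x y, D x (t • y) = t • D x y) (x y : α) : D x y = 0 := by
  have hyx : D y x = -D x y := eq_neg_of_add_eq_zero_left (hswap y x)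
  have key : t • D x y = (t * t) • D x y :=
    calc t • D x y = D x (t • y) := (hright x y).symm
      _ = -D (t • y) x := eq_neg_of_add_eq_zero_left (hswap x (t • y))
      _ = (t * t) • D x y := by rw [hleft, hyx, smul_neg, neg_neg]
  have hsub : (t * t - t) • D x y = 0 := by rw [sub_smul, key, sub_self]
  exact (smul_eq_zero.mp hsub).resolve_left (sub_ne_zero.mpr ht)

theorem CharTwo.add_self_eq_zero_of_module (R : Type*) {M : Type*} [Ring R] [CharP R 2]
    [AddCommGroup M] [Module R M] (x : M) : x + x = 0 := by
  rw [← two_smul R x, CharTwo.two_eq_zero, zero_smul]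

namespace PolarityAlgebra

variable (P : PolarityAlgebra K V)

theorem br_zero : P.br 0 = 0 := by
  simpa using P.br_add 0 0

protected theorem mul_zero (x : V) : P.mul x 0 = 0 := by
  simpa [br_zero] using P.R2 0 x

theorem polar_mul_self (a x : V) : polar P.q (P.mul a x) a = 0 := by
  refine P.br_inj ?_
  simpa [CharTwo.add_self_eq_zero_of_module K, P.mul_zero, br_zero] using (P.R7 x a a).symm

theorem polar_self_mul (a x : V) : polar P.q a (P.mul a x) = 0 := by
  rw [polar_comm, polar_mul_self]

-- Expanding `c·((x + y)·c)` by (R6) and by (R7) gives the same terms up to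
-- `[θ(q c) f(x, y·c)]` versus `[θ(q c) f(x·c, y)]`.
theorem polar_mul_right_adjoint (x y c : V) :
    polar P.q x (P.mul y c) = polar P.q (P.mul x c) y := by
  rcases eq_or_ne c 0 with rfl | hc
  · rw [P.mul_zero, P.mul_zero, polar_zero_right, polar_zero_left]
  have hθ : P.θ (P.q c) ≠ 0 := (map_ne_zero P.θ).mpr fun h => hc (P.anisotropic c h)
  have h6 := P.R6 (x + y) c
  rw [(P.R1 c).map_add, P.R7 c, P.R6, P.R6, P.R5, polar_smul_left, smul_eq_mul, P.R7 c x y,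
    smul_add, smul_add, P.br_smul] at h6
  exact mul_left_cancel₀ hθ (P.br_inj (add_left_cancel h6))

theorem mul_add_add_br (x a b : V) (s : K) :
    P.mul x (a + b + P.br s) = P.mul x a + P.mul x b + s • x + P.br (polar P.q (P.mul a x) b) := by
  rw [P.R7, polar_comm, P.br_rad, br_zero, add_zero, P.R7, P.R2]
  abel

theorem mul_mul_add_mul_mul (u v w : V) :
    P.mul v (P.mul w u) + P.mul u (P.mul w v)
      = polar P.q u (P.mul v w) • (u + v) + polar P.q u v • (P.mul u w + P.mul v w)
        + P.q u • P.mul v w + P.q v • P.mul u w := by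
  have hu : polar P.q (P.mul (P.mul w u) u) (P.mul w v) = 0 := by
    rw [P.R5, polar_smul_left, polar_self_mul, smul_zero]
  have hv : polar P.q (P.mul (P.mul w u) v) (P.mul w v) = 0 := by
    rw [← polar_mul_right_adjoint, P.R5, polar_smul_right, polar_mul_self, smul_zero]
  have h := P.R6 w (u + v)
  rw [P.R7 w u v, (P.R1 _).map_add, mul_add_add_br, mul_add_add_br, hu, hv, br_zero, add_zero,
    add_zero, P.R6 w u, P.R6 w v, QuadraticMap.map_add P.q, (P.R1 w).map_add,
    ← polar_mul_right_adjoint P u v w] at h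
  linear_combination (norm := module)
    h - (CharTwo.two_eq_zero (R := K)) • (polar P.q u (P.mul v w) • (u + v))

def defect (w u v : V) : V :=
  P.mul v (P.mul w u)
    - (polar P.q u (P.mul v w) • u + polar P.q u v • P.mul u w + P.q u • P.mul v w)

theorem defect_add_defect_swap (w u v : V) : P.defect w u v + P.defect w v u = 0 := by
  have hpolar : polar P.q v (P.mul u w) = polar P.q u (P.mul v w) := by
    rw [polar_mul_right_adjoint, polar_comm]
  rw [defect, defect, hpolar, polar_comm P.q v u]
  linear_combination (norm := module) P.mul_mul_add_mul_mul u v w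

theorem defect_smul_left (t : K) (w u v : V) :
    P.defect w (t • u) v = (t * t) • P.defect w u v := by
  rw [defect, defect, P.R3, P.R3, P.tits, polar_smul_left, polar_smul_left, QuadraticMap.map_smul,
    (P.R1 w).map_smul]
  module

theorem defect_smul_right (t : K) (w u v : V) : P.defect w u (t • v) = t • P.defect w u v := by
  rw [defect, defect, (P.R1 _).map_smul, (P.R1 w).map_smul, polar_smul_right, polar_smul_right]
  module

theorem exists_mul_self_ne_self (P : PolarityAlgebra K V) : ∃ t : K, t * t ≠ t := by
  by_contra! hK
  have q_eq_one {z : V} (hz : z ≠ 0) : P.q z = 1 :=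
    (IsIdempotentElem.iff_eq_zero_or_one.mp (hK (P.q z))).resolve_left
      fun h => hz (P.anisotropic z h)
  obtain ⟨x, y, hxy⟩ := P.f_ne_zero
  have ne_zero_of_polar {z : V} (hz : polar P.q z y ≠ 0) : z ≠ 0 := by
    rintro rfl
    exact hz (polar_zero_left ..)
  have hxb : polar P.q (x + P.br 1) y ≠ 0 := by rwa [polar_add_left, P.br_rad, add_zero]
  have hb : P.br 1 ≠ 0 := fun h => one_ne_zero (P.br_inj (h.trans P.br_zero.symm))
  have hq := QuadraticMap.map_add P.q x (P.br 1)
  rw [q_eq_one (ne_zero_of_polar hxb), q_eq_one (ne_zero_of_polar hxy), q_eq_one hb, polar_comm,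
    P.br_rad, add_zero] at hq
  exact one_ne_zero (left_eq_add.mp hq)

end PolarityAlgebra

/-- In a polarity algebra, `v·(w·u) = f(u, v·w)u + f(u,v)(u·w) + q(u)(v·w)`. -/
theorem polarityAlgebra_mul_identity (P : PolarityAlgebra K V) (u v w : V) :
    P.mul v (P.mul w u)
      = polar P.q u (P.mul v w) • u + polar P.q u v • P.mul u w
        + P.q u • P.mul v w := by
  obtain ⟨t, ht⟩ := P.exists_mul_self_ne_self
  exact sub_eq_zero.mp <| eq_zero_of_add_swap_eq_zero (P.defect_add_defect_swap w) ht
    (P.defect_smul_left t w) (P.defect_smul_right t w) u v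
end

section
/- Let P = (K, V, q, θ, t ↦ [t], ·) be a polarity algebra. Then q([t]) = t^θ for all t ∈ K. -/
open QuadraticMap

variable {K V : Type*} [Field K] [CharP K 2] [AddCommGroup V] [Module K V]

theorem QuadraticMap.left_ne_zero_of_polar_ne_zero {R M N : Type*} [CommRing R]
    [AddCommGroup M] [Module R M] [AddCommGroup N] [Module R N] (Q : QuadraticMap R M N)
    {u v : M} (h : polar Q u v ≠ 0) : u ≠ 0 := by
  rintro rfl
  exact h (polar_zero_left Q v)

namespace PolarityAlgebra

theorem exists_ne_zero (P : PolarityAlgebra K V) : ∃ u : V, u ≠ 0 :=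
  let ⟨u, _, h⟩ := P.f_ne_zero
  ⟨u, P.q.left_ne_zero_of_polar_ne_zero h⟩

theorem mul_mul_br_br (P : PolarityAlgebra K V) (u : V) (t : K) :
    P.mul (P.mul u (P.br t)) (P.br t) = P.θ (P.θ t) • u := by
  rw [P.R2, P.R2, smul_smul, ← pow_two, P.tits]

-- Evaluate `(u[t])[t]` once by (R5) and once by (R2) twice, then cancel a nonzero `u`.
theorem θ_q_br (P : PolarityAlgebra K V) (t : K) : P.θ (P.q (P.br t)) = P.θ (P.θ t) := by
  obtain ⟨u, hu⟩ := P.exists_ne_zero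
  have h := P.R5 u (P.br t)
  rw [P.mul_mul_br_br] at h
  exact smul_left_injective K hu h.symm

end PolarityAlgebra

/-- In a polarity algebra, `q([t]) = t^θ` for all `t ∈ K`. -/
theorem polarityAlgebra_q_br (P : PolarityAlgebra K V) (t : K) :
    P.q (P.br t) = P.θ t :=
  P.θ.injective (P.θ_q_br t)
end

section
/- Let P = (K, V, q, θ, t ↦ [t], ·) be a polarity algebra with polar form f. Then f(u·v, u·w) = f(v, w·u)^θ + q(u)·f(v,w)^θ for all u, v, w ∈ V. -/
/-!
Apply `q` to (R7) for `u·(v + w)`. Multiplicativity `q(x·y) = q(x) q(y)^θ` turns the left side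
into `q(u)(q(v)^θ + q(w)^θ + f(v,w)^θ)`, while on the right `[t]` lies in the radical of `f`
and `q([t]) = t^θ`, so the right side is `q(u·v) + q(u·w) + f(u·v, u·w) + f(v·u, w)^θ`.
Comparing the two and using the symmetry `f(v·u, w) = f(w·u, v)`, read off from (R7) with `v`
and `w` exchanged, gives the identity in characteristic 2.

Multiplicativity comes from (R5) and (R6): they give `(u·v)·(v·u) = q(u·v) u`, hence
`q(v) q(v·u) = q(u·v)^θ`, and the same relation with `u, v` exchanged combines with `θ² = (·)²`.
-/

open QuadraticMap

variable {K V : Type*} [Field K] [CharP K 2] [AddCommGroup V] [Module K V]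

namespace PolarityAlgebra

variable (P : PolarityAlgebra K V)

include P in
lemma nontrivial : Nontrivial V := by
  obtain ⟨u, v, h⟩ := P.f_ne_zero
  refine ⟨u, 0, fun hu => h ?_⟩
  simp [hu, polar]

lemma q_ne_zero {v : V} (hv : v ≠ 0) : P.q v ≠ 0 := fun h => hv (P.anisotropic v h)

lemma mul_zero_left (v : V) : P.mul 0 v = 0 := (P.R1 v).map_zero

lemma mul_zero_right (u : V) : P.mul u 0 = 0 := by
  simpa using P.R3 0 u 0

lemma q_br (t : K) : P.q (P.br t) = P.θ t := by
  have := P.nontrivial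
  obtain ⟨u, hu⟩ := exists_ne (0 : V)
  have h := P.R5 u (P.br t)
  rw [P.R2, P.R2, smul_smul, ← pow_two, ← P.tits] at h
  exact (P.θ.injective (smul_left_injective K hu h)).symm

lemma polar_mul_swap (u v w : V) :
    polar P.q (P.mul v u) w = polar P.q (P.mul w u) v := by
  apply P.br_inj
  have h := P.R7 u w v
  rw [add_comm w v, P.R7 u v w, add_comm (P.mul u w) (P.mul u v)] at h
  exact add_left_cancel h

lemma eq_zero_of_mul_eq_zero {u v : V} (hv : v ≠ 0) (h : P.mul u v = 0) : u = 0 := by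
  have h5 := P.R5 u v
  rw [h, P.mul_zero_left, eq_comm, smul_eq_zero] at h5
  exact h5.resolve_left ((map_ne_zero P.θ).mpr (P.q_ne_zero hv))

lemma mul_mul_mul_swap (u : V) {v : V} (hv : v ≠ 0) :
    P.mul (P.mul u v) (P.mul v u) = P.q (P.mul u v) • u := by
  have h := P.R6 v (P.mul u v)
  rw [P.R6 u v, P.R3, P.R5, smul_comm (P.q (P.mul u v))] at h
  exact smul_right_injective V ((map_ne_zero P.θ).mpr (P.q_ne_zero hv)) h

lemma q_mul_q_mul_swap {u v : V} (hu : u ≠ 0) (hv : v ≠ 0) :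
    P.q v * P.q (P.mul v u) = P.θ (P.q (P.mul u v)) := by
  have h := P.R5 v (P.mul u v)
  rw [P.R6 u v, (P.R1 (P.mul u v)).map_smul, P.mul_mul_mul_swap v hu, smul_smul] at h
  exact smul_left_injective K hv h

lemma q_mul (u v : V) : P.q (P.mul u v) = P.q u * P.θ (P.q v) := by
  rcases eq_or_ne u 0 with rfl | hu
  · simp [P.mul_zero_left]
  rcases eq_or_ne v 0 with rfl | hv
  · simp [P.mul_zero_right]
  have hq : P.q (P.mul u v) ≠ 0 := P.q_ne_zero fun h => hu (P.eq_zero_of_mul_eq_zero hv h)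
  refine (mul_right_cancel₀ hq ?_).symm
  calc P.q u * P.θ (P.q v) * P.q (P.mul u v)
      = P.θ (P.q v) * (P.q u * P.q (P.mul u v)) := by ring
    _ = P.θ (P.q v * P.q (P.mul v u)) := by rw [P.q_mul_q_mul_swap hv hu, map_mul]
    _ = P.q (P.mul u v) * P.q (P.mul u v) := by rw [P.q_mul_q_mul_swap hu hv, P.tits, pow_two]

lemma polar_mul_mul_add_θ_polar (u v w : V) :
    polar P.q (P.mul u v) (P.mul u w) + P.θ (polar P.q (P.mul v u) w)
      = P.q u * P.θ (polar P.q v w) := by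
  have h := congrArg P.q (P.R7 u v w)
  rw [QuadraticMap.map_add (⇑P.q), QuadraticMap.map_add (⇑P.q), polar_comm _ _ (P.br _), P.br_rad,
    P.q_br, P.q_mul, P.q_mul, P.q_mul, QuadraticMap.map_add (⇑P.q), map_add, map_add] at h
  linear_combination -h

end PolarityAlgebra

/-- In a polarity algebra, `f(u·v, u·w) = f(v, w·u)^θ + q(u) f(v,w)^θ`. -/
theorem polarityAlgebra_polar_mul_left (P : PolarityAlgebra K V) (u v w : V) :
    polar P.q (P.mul u v) (P.mul u w)
      = P.θ (polar P.q v (P.mul w u)) + P.q u * P.θ (polar P.q v w) := by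
  have h := P.polar_mul_mul_add_θ_polar u v w
  rw [P.polar_mul_swap u v w, polar_comm P.q (P.mul w u) v] at h
  linear_combination h - P.θ (polar P.q v (P.mul w u)) * CharTwo.two_eq_zero (R := K)
end

section
/- Let P = (K, V, q, θ, t ↦ [t], ·) be a polarity algebra with polar form f. Then f(u·v, w·v) = q(v)^θ·f(u, w) for all u, v, w ∈ V. -/
open QuadraticMap

variable {K V : Type*} [Field K] [CharP K 2] [AddCommGroup V] [Module K V]

namespace PolarityAlgebra

/-- Comparing (R7) for `x·(a + b)` and `x·(b + a)` leaves `[f(a·x, b)] = [f(b·x, a)]`. -/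
theorem polar_mul_right_symm (P : PolarityAlgebra K V) (x a b : V) :
    polar P.q (P.mul a x) b = polar P.q (P.mul b x) a := by
  apply P.br_inj
  have h := P.R7 x a b
  rw [add_comm a b, P.R7 x b a, add_comm (P.mul x b)] at h
  exact (add_left_cancel h).symm

end PolarityAlgebra

/-- In a polarity algebra, `f(u·v, w·v) = q(v)^θ f(u, w)`. -/
theorem polarityAlgebra_polar_mul_right (P : PolarityAlgebra K V) (u v w : V) :
    polar P.q (P.mul u v) (P.mul w v) = P.θ (P.q v) * polar P.q u w := by
  calc polar P.q (P.mul u v) (P.mul w v)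
      = polar P.q (P.mul (P.mul w v) v) u := P.polar_mul_right_symm v u _
    _ = P.θ (P.q v) * polar P.q u w := by rw [P.R5, polar_smul_left, smul_eq_mul, polar_comm]
end
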